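/- arXiv:2604.13399 — 5 statements merged into one kernel-verified Lean document; each statement's English description precedes it below -/
import Mathlib

section
/- Suppose φ : ℝ → ℝ is strictly concave, B ⊆ ℝ^d is convex, for every b ∈ B the random variable Y·φ(X·b) + (1−Y)·φ(−X·b) is integrable, and for every nonzero v ∈ ℝ^d, P(X·v ≠ 0) > 0. Then Q_φ is strictly concave on B: for all b₁, b₂ ∈ B with b₁ ≠ b₂ and all λ ∈ (0,1), Q_φ(λb₁ + (1−λ)b₂) > λ·Q_φ(b₁) + (1−λ)·Q_φ(b₂). -/
open MeasureTheory
open scoped RealInnerProductSpace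

/-- The surrogate objective `Q_φ(b) = E[Y·φ(X·b) + (1−Y)·φ(−X·b)]`. -/
noncomputable def Qphi {Ω : Type*} [MeasurableSpace Ω] (P : Measure Ω) {d : ℕ}
    (X : Ω → EuclideanSpace ℝ (Fin d)) (Y : Ω → ℝ) (φ : ℝ → ℝ)
    (b : EuclideanSpace ℝ (Fin d)) : ℝ :=
  ∫ ω, (Y ω * φ (⟪X ω, b⟫) + (1 - Y ω) * φ (-⟪X ω, b⟫)) ∂P

theorem surrogate_objective_strictConcaveOn
    {Ω : Type*} [MeasurableSpace Ω] (P : Measure Ω) [IsProbabilityMeasure P]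
    {d : ℕ} (X : Ω → EuclideanSpace ℝ (Fin d)) (Y : Ω → ℝ)
    (hX : Measurable X) (hY : Measurable Y) (hY01 : ∀ ω, Y ω = 0 ∨ Y ω = 1)
    (φ : ℝ → ℝ) (hφ : StrictConcaveOn ℝ Set.univ φ)
    (B : Set (EuclideanSpace ℝ (Fin d))) (hBconv : Convex ℝ B)
    (hint : ∀ b ∈ B,
      Integrable (fun ω => Y ω * φ (⟪X ω, b⟫) + (1 - Y ω) * φ (-⟪X ω, b⟫)) P)
    -- for every nonzero v, P(X·v ≠ 0) > 0
    (hndeg : ∀ v : EuclideanSpace ℝ (Fin d), v ≠ 0 → 0 < P {ω | ⟪X ω, v⟫ ≠ 0}) :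
    ∀ b₁ ∈ B, ∀ b₂ ∈ B, b₁ ≠ b₂ → ∀ l : ℝ, l ∈ Set.Ioo (0 : ℝ) 1 →
      l * Qphi P X Y φ b₁ + (1 - l) * Qphi P X Y φ b₂
        < Qphi P X Y φ (l • b₁ + (1 - l) • b₂) := by
  intro b₁ hb₁ b₂ hb₂ hne l hl
  obtain ⟨hl0, hl1⟩ := hl
  have hl1' : 0 < 1 - l := by linarith
  set b : EuclideanSpace ℝ (Fin d) := l • b₁ + (1 - l) • b₂ with hbdef
  have hbB : b ∈ B := hBconv hb₁ hb₂ hl0.le hl1'.le (by ring)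
  set f : Ω → ℝ := fun ω => Y ω * φ ⟪X ω, b⟫ + (1 - Y ω) * φ (-⟪X ω, b⟫) with hf
  set f₁ : Ω → ℝ := fun ω => Y ω * φ ⟪X ω, b₁⟫ + (1 - Y ω) * φ (-⟪X ω, b₁⟫) with hf1
  set f₂ : Ω → ℝ := fun ω => Y ω * φ ⟪X ω, b₂⟫ + (1 - Y ω) * φ (-⟪X ω, b₂⟫) with hf2
  have hif : Integrable f P := hint b hbB
  have hif₁ : Integrable f₁ P := hint b₁ hb₁
  have hif₂ : Integrable f₂ P := hint b₂ hb₂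
  have hinner : ∀ ω, ⟪X ω, b⟫ = l * ⟪X ω, b₁⟫ + (1 - l) * ⟪X ω, b₂⟫ := by
    intro ω
    rw [hbdef, inner_add_right, real_inner_smul_right, real_inner_smul_right]
  have hcc : ∀ t₁ t₂ : ℝ, l * φ t₁ + (1 - l) * φ t₂ ≤ φ (l * t₁ + (1 - l) * t₂) := by
    intro t₁ t₂
    have := hφ.concaveOn.2 (Set.mem_univ t₁) (Set.mem_univ t₂) hl0.le hl1'.le (by ring)
    simpa [smul_eq_mul] using this
  have hccs : ∀ t₁ t₂ : ℝ, t₁ ≠ t₂ →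
      l * φ t₁ + (1 - l) * φ t₂ < φ (l * t₁ + (1 - l) * t₂) := by
    intro t₁ t₂ h
    have := hφ.2 (Set.mem_univ t₁) (Set.mem_univ t₂) h hl0 hl1' (by ring)
    simpa [smul_eq_mul] using this
  have hneg : ∀ ω, -⟪X ω, b⟫ = l * -⟪X ω, b₁⟫ + (1 - l) * -⟪X ω, b₂⟫ := by
    intro ω; rw [hinner ω]; ring
  have key : ∀ ω, l * f₁ ω + (1 - l) * f₂ ω ≤ f ω := by
    intro ω
    have e1 := hcc ⟪X ω, b₁⟫ ⟪X ω, b₂⟫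
    have e2 := hcc (-⟪X ω, b₁⟫) (-⟪X ω, b₂⟫)
    rw [show l * -⟪X ω, b₁⟫ + (1 - l) * -⟪X ω, b₂⟫
      = -(l * ⟪X ω, b₁⟫ + (1 - l) * ⟪X ω, b₂⟫) from by ring] at e2
    rcases hY01 ω with h | h <;>
      simp only [hf, hf1, hf2, h, hneg ω, hinner ω, zero_mul, one_mul, sub_zero,
        sub_self, zero_add, add_zero] <;> linarith
  have keys : ∀ ω, ⟪X ω, b₁ - b₂⟫ ≠ 0 → l * f₁ ω + (1 - l) * f₂ ω < f ω := by
    intro ω hw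
    have hne12 : ⟪X ω, b₁⟫ ≠ ⟪X ω, b₂⟫ := by
      intro h
      apply hw
      rw [inner_sub_right, h, sub_self]
    have e1 := hccs ⟪X ω, b₁⟫ ⟪X ω, b₂⟫ hne12
    have e2 := hccs (-⟪X ω, b₁⟫) (-⟪X ω, b₂⟫) (by simpa using hne12)
    rw [show l * -⟪X ω, b₁⟫ + (1 - l) * -⟪X ω, b₂⟫
      = -(l * ⟪X ω, b₁⟫ + (1 - l) * ⟪X ω, b₂⟫) from by ring] at e2
    rcases hY01 ω with h | h <;>
      simp only [hf, hf1, hf2, h, hneg ω, hinner ω, zero_mul, one_mul, sub_zero,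
        sub_self, zero_add, add_zero] <;> linarith
  set g : Ω → ℝ := fun ω => l * f₁ ω + (1 - l) * f₂ ω with hg
  have hig : Integrable g P := (hif₁.const_mul l).add (hif₂.const_mul (1 - l))
  have hidiff : Integrable (fun ω => f ω - g ω) P := hif.sub hig
  have hnonneg : 0 ≤ᵐ[P] fun ω => f ω - g ω :=
    Filter.Eventually.of_forall fun ω => sub_nonneg.2 (key ω)
  have hnotae : ¬ (fun ω => f ω - g ω) =ᵐ[P] 0 := by
    intro hae
    have hsub : {ω | ⟪X ω, b₁ - b₂⟫ ≠ 0} ⊆ {ω | f ω - g ω ≠ 0} := by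
      intro ω hω
      exact ne_of_gt (sub_pos.2 (keys ω hω))
    have hnull : P {ω | f ω - g ω ≠ 0} = 0 := by
      simpa [Filter.EventuallyEq, ae_iff] using hae
    have := measure_mono_null hsub hnull
    exact absurd this (hndeg (b₁ - b₂) (sub_ne_zero.2 hne)).ne'
  have hintpos : 0 < ∫ ω, (f ω - g ω) ∂P := by
    rcases lt_or_eq_of_le (integral_nonneg_of_ae hnonneg) with h | h
    · exact h
    · exact absurd ((integral_eq_zero_iff_of_nonneg_ae hnonneg hidiff).mp h.symm) hnotae
  have hsplit : ∫ ω, (f ω - g ω) ∂P = (∫ ω, f ω ∂P) - ∫ ω, g ω ∂P :=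
    integral_sub hif hig
  have hgsplit : ∫ ω, g ω ∂P = l * (∫ ω, f₁ ω ∂P) + (1 - l) * ∫ ω, f₂ ω ∂P := by
    rw [hg]
    rw [integral_add (hif₁.const_mul l) (hif₂.const_mul (1 - l)),
      integral_const_mul, integral_const_mul]
  have hQ : Qphi P X Y φ b = ∫ ω, f ω ∂P := rfl
  have hQ1 : Qphi P X Y φ b₁ = ∫ ω, f₁ ω ∂P := rfl
  have hQ2 : Qphi P X Y φ b₂ = ∫ ω, f₂ ω ∂P := rfl
  rw [hQ, hQ1, hQ2]
  rw [hsplit, hgsplit] at hintpos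
  linarith
end

section
/- Suppose Assumption (Bayes boundary) holds, φ : ℝ → ℝ is strictly concave, strictly increasing, and differentiable at 0 with φ'(0) > 0, E[sup_{b∈B}(|φ(X·b)| + |φ(−X·b)|)] < ∞, B = {b ∈ ℝ^d : ‖b‖ ≤ R} for some R ∈ (0,∞), and for every nonzero v ∈ ℝ^d, P(X·v ≠ 0) > 0. Then the surrogate maximization problem max_{b∈B} Q_φ(b) admits a unique solution: there exists exactly one b_φ ∈ B such that Q_φ(b_φ) ≥ Q_φ(b) for all b ∈ B. -/
/-! For `Y ∈ {0, 1}` the integrand of `Q_φ(b)` is `φ(±⟪X, b⟫)`. The envelope dominates it on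
the compact ball, so `Q_φ` is continuous there and attains its maximum. Between two distinct
points `b ≠ b'` the integrand is strictly concave on the event `⟪X, b - b'⟫ ≠ 0`, which has
positive probability, so `Q_φ` is strictly concave on the convex ball and the maximizer is
unique. -/

open MeasureTheory
open scoped RealInnerProductSpace

open Set

/-- The loss of the score `t` at label `y`; `Qphi` is its expectation at `y = Y`, `t = ⟪X, b⟫`. -/
def surrogateLoss (φ : ℝ → ℝ) (y t : ℝ) : ℝ := y * φ t + (1 - y) * φ (-t)

section SurrogateLoss

variable {φ : ℝ → ℝ} {y : ℝ}

@[simp] lemma surrogateLoss_zero : surrogateLoss φ 0 = fun t => φ (-t) := by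
  ext t; simp [surrogateLoss]

@[simp] lemma surrogateLoss_one : surrogateLoss φ 1 = φ := by
  ext t; simp [surrogateLoss]

lemma abs_surrogateLoss_le (hy : y = 0 ∨ y = 1) (t : ℝ) :
    |surrogateLoss φ y t| ≤ |φ t| + |φ (-t)| := by
  rcases hy with rfl | rfl <;> simp

lemma continuous_surrogateLoss (hφ : Continuous φ) :
    Continuous fun p : ℝ × ℝ => surrogateLoss φ p.1 p.2 := by
  unfold surrogateLoss; fun_prop

lemma StrictConcaveOn.comp_neg_univ {E : Type*} [AddCommGroup E] [Module ℝ E] {f : E → ℝ}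
    (hf : StrictConcaveOn ℝ univ f) : StrictConcaveOn ℝ univ fun x => f (-x) := by
  refine ⟨convex_univ, fun x _ y _ hxy a b ha hb hab => ?_⟩
  simpa only [smul_neg, neg_add] using
    hf.2 (mem_univ (-x)) (mem_univ (-y)) (neg_injective.ne hxy) ha hb hab

lemma strictConcaveOn_surrogateLoss (hφ : StrictConcaveOn ℝ univ φ) (hy : y = 0 ∨ y = 1) :
    StrictConcaveOn ℝ univ (surrogateLoss φ y) := by
  rcases hy with rfl | rfl
  · simpa only [surrogateLoss_zero] using hφ.comp_neg_univ
  · rwa [surrogateLoss_one]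

end SurrogateLoss

lemma le_biSup_of_bddAbove_image {α β : Type*} [ConditionallyCompleteLattice α] {f : β → α}
    {s : Set β} (hf : BddAbove (f '' s)) {x : β} (hx : x ∈ s) : f x ≤ ⨆ y ∈ s, f y :=
  le_ciSup₂ (f := fun y _ => f y)
    (hf.mono (by rintro _ ⟨_, ⟨y, rfl⟩, ⟨hy, rfl⟩⟩; exact mem_image_of_mem f hy)) x hx

lemma strictConcaveOn_integral {Ω E : Type*} [MeasurableSpace Ω] {μ : Measure Ω}
    [AddCommGroup E] [Module ℝ E] {s : Set E} {F : E → Ω → ℝ} (hs : Convex ℝ s)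
    (hint : ∀ x ∈ s, Integrable (F x) μ) (hconc : ∀ ω, ConcaveOn ℝ s (F · ω))
    (hstrict : ∀ x ∈ s, ∀ y ∈ s, x ≠ y → ∀ a b : ℝ, 0 < a → 0 < b → a + b = 1 →
      0 < μ {ω | a • F x ω + b • F y ω < F (a • x + b • y) ω}) :
    StrictConcaveOn ℝ s fun x => ∫ ω, F x ω ∂μ := by
  refine ⟨hs, fun x hx y hy hxy a b ha hb hab => ?_⟩
  have hmem : a • x + b • y ∈ s := hs hx hy ha.le hb.le hab
  have hchord : Integrable (fun ω => a • F x ω + b • F y ω) μ :=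
    ((hint x hx).smul a).add ((hint y hy).smul b)
  have hgap : 0 < ∫ ω, (F (a • x + b • y) ω - (a • F x ω + b • F y ω)) ∂μ := by
    rw [integral_pos_iff_support_of_nonneg
      (fun ω => sub_nonneg.2 ((hconc ω).2 hx hy ha.le hb.le hab)) ((hint _ hmem).sub hchord)]
    refine (hstrict x hx y hy hxy a b ha hb hab).trans_le (measure_mono fun ω hω => ?_)
    exact (sub_pos.2 hω).ne'
  rw [integral_sub (hint _ hmem) hchord,
    integral_add (f := fun ω => a • F x ω) (g := fun ω => b • F y ω)
      ((hint x hx).smul a) ((hint y hy).smul b), integral_smul, integral_smul] at hgap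
  exact sub_pos.1 hgap

section Qphi

variable {Ω : Type*} {d : ℕ} {X : Ω → EuclideanSpace ℝ (Fin d)} {Y : Ω → ℝ} {φ : ℝ → ℝ}
  {B : Set (EuclideanSpace ℝ (Fin d))}

lemma norm_surrogateLoss_inner_le_iSup (hY01 : ∀ ω, Y ω = 0 ∨ Y ω = 1) (hφ : Continuous φ)
    (hB : IsCompact B) (ω : Ω) {b : EuclideanSpace ℝ (Fin d)} (hb : b ∈ B) :
    ‖surrogateLoss φ (Y ω) ⟪X ω, b⟫‖ ≤ ⨆ b ∈ B, (|φ ⟪X ω, b⟫| + |φ (-⟪X ω, b⟫)|) :=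
  (abs_surrogateLoss_le (hY01 ω) _).trans <|
    le_biSup_of_bddAbove_image (f := fun b => |φ ⟪X ω, b⟫| + |φ (-⟪X ω, b⟫)|)
      (hB.bddAbove_image (by fun_prop)) hb

variable [MeasurableSpace Ω] {P : Measure Ω}

lemma measurable_surrogateLoss_inner (hX : Measurable X) (hY : Measurable Y) (hφ : Continuous φ)
    (b : EuclideanSpace ℝ (Fin d)) : Measurable fun ω => surrogateLoss φ (Y ω) ⟪X ω, b⟫ :=
  (continuous_surrogateLoss hφ).measurable.comp (hY.prodMk (hX.inner measurable_const))

lemma integrable_surrogateLoss_inner (hX : Measurable X) (hY : Measurable Y)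
    (hY01 : ∀ ω, Y ω = 0 ∨ Y ω = 1) (hφ : Continuous φ) (hB : IsCompact B)
    (henv : Integrable (fun ω => ⨆ b ∈ B, (|φ ⟪X ω, b⟫| + |φ (-⟪X ω, b⟫)|)) P)
    {b : EuclideanSpace ℝ (Fin d)} (hb : b ∈ B) :
    Integrable (fun ω => surrogateLoss φ (Y ω) ⟪X ω, b⟫) P :=
  henv.mono' (measurable_surrogateLoss_inner hX hY hφ b).aestronglyMeasurable
    (ae_of_all _ fun ω => norm_surrogateLoss_inner_le_iSup hY01 hφ hB ω hb)

lemma continuousOn_Qphi (hX : Measurable X) (hY : Measurable Y)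
    (hY01 : ∀ ω, Y ω = 0 ∨ Y ω = 1) (hφ : Continuous φ) (hB : IsCompact B)
    (henv : Integrable (fun ω => ⨆ b ∈ B, (|φ ⟪X ω, b⟫| + |φ (-⟪X ω, b⟫)|)) P) :
    ContinuousOn (Qphi P X Y φ) B :=
  continuousOn_of_dominated
    (fun b _ => (measurable_surrogateLoss_inner hX hY hφ b).aestronglyMeasurable)
    (fun _ hb => ae_of_all _ fun ω => norm_surrogateLoss_inner_le_iSup hY01 hφ hB ω hb) henv
    (ae_of_all _ fun ω => by fun_prop)

lemma strictConcaveOn_Qphi (hY01 : ∀ ω, Y ω = 0 ∨ Y ω = 1) (hφ : StrictConcaveOn ℝ univ φ)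
    (hB : Convex ℝ B)
    (hint : ∀ b ∈ B, Integrable (fun ω => surrogateLoss φ (Y ω) ⟪X ω, b⟫) P)
    (hndeg : ∀ v : EuclideanSpace ℝ (Fin d), v ≠ 0 → 0 < P {ω | ⟪X ω, v⟫ ≠ 0}) :
    StrictConcaveOn ℝ B (Qphi P X Y φ) := by
  have hL : ∀ ω, StrictConcaveOn ℝ univ (surrogateLoss φ (Y ω)) :=
    fun ω => strictConcaveOn_surrogateLoss hφ (hY01 ω)
  refine strictConcaveOn_integral hB hint
    (fun ω => ((hL ω).concaveOn.comp_linearMap (innerₛₗ ℝ (X ω))).subset (fun _ _ => trivial) hB)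
    fun x _ y _ hxy a b ha hb hab => (hndeg (x - y) (sub_ne_zero.2 hxy)).trans_le <|
      measure_mono fun ω hω => ?_
  have hsep : ⟪X ω, x⟫ ≠ ⟪X ω, y⟫ := by
    rw [← sub_ne_zero, ← inner_sub_right]; exact hω
  simp only [mem_ofPred_eq, inner_add_right, real_inner_smul_right]
  exact (hL ω).2 trivial trivial hsep ha hb hab

end Qphi

theorem surrogate_maximizer_exists_unique_general
    {Ω : Type*} [MeasurableSpace Ω] (P : Measure Ω)
    {d : ℕ} (X : Ω → EuclideanSpace ℝ (Fin d)) (Y : Ω → ℝ)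
    (hX : Measurable X) (hY : Measurable Y) (hY01 : ∀ ω, Y ω = 0 ∨ Y ω = 1)
    (B : Set (EuclideanSpace ℝ (Fin d))) (hBne : B.Nonempty) (hBcpt : IsCompact B)
    -- Assumption (surrogate score function)
    (φ : ℝ → ℝ) (hφconc : StrictConcaveOn ℝ Set.univ φ)
    -- regularity conditions
    (henv : Integrable (fun ω => ⨆ b ∈ B, (|φ (⟪X ω, b⟫)| + |φ (-⟪X ω, b⟫)|)) P)
    (R : ℝ) (hBball : B = Metric.closedBall (0 : EuclideanSpace ℝ (Fin d)) R)
    (hndeg : ∀ v : EuclideanSpace ℝ (Fin d), v ≠ 0 → 0 < P {ω | ⟪X ω, v⟫ ≠ 0}) :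
    ∃! bφ, bφ ∈ B ∧ ∀ b ∈ B, Qphi P X Y φ b ≤ Qphi P X Y φ bφ := by
  have hφ : Continuous φ := continuousOn_univ.1 (hφconc.concaveOn.continuousOn isOpen_univ)
  have hQ : StrictConcaveOn ℝ B (Qphi P X Y φ) :=
    strictConcaveOn_Qphi hY01 hφconc (hBball ▸ convex_closedBall 0 R)
      (fun _ hb => integrable_surrogateLoss_inner hX hY hY01 hφ hBcpt henv hb) hndeg
  obtain ⟨bφ, hbφ, hmax⟩ := hBcpt.exists_isMaxOn hBne (continuousOn_Qphi hX hY hY01 hφ hBcpt henv)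
  exact ⟨bφ, ⟨hbφ, hmax⟩, fun b ⟨hb, hbmax⟩ => hQ.eq_of_isMaxOn hbmax hmax hb hbφ⟩

theorem surrogate_maximizer_exists_unique
    {Ω : Type*} [MeasurableSpace Ω] (P : Measure Ω) [IsProbabilityMeasure P]
    {d : ℕ} (X : Ω → EuclideanSpace ℝ (Fin d)) (Y : Ω → ℝ)
    (η : EuclideanSpace ℝ (Fin d) → ℝ)
    (hX : Measurable X) (hY : Measurable Y) (hY01 : ∀ ω, Y ω = 0 ∨ Y ω = 1)
    (hη : Measurable η) (hη01 : ∀ x, η x ∈ Set.Icc (0 : ℝ) 1)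
    (hcond : ∀ g : EuclideanSpace ℝ (Fin d) → ℝ, Measurable g → (∃ C, ∀ x, |g x| ≤ C) →
      ∫ ω, Y ω * g (X ω) ∂P = ∫ ω, η (X ω) * g (X ω) ∂P)
    (B : Set (EuclideanSpace ℝ (Fin d))) (hBne : B.Nonempty) (hBcpt : IsCompact B)
    (b₀ : EuclideanSpace ℝ (Fin d)) (hb₀B : b₀ ∈ B)
    -- Assumption (Bayes boundary)
    (hBayes₁ : ∀ᵐ ω ∂P, ((1 : ℝ) / 2 ≤ η (X ω) ↔ 0 ≤ ⟪X ω, b₀⟫))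
    (hBayes₂ : 0 < P {ω | 0 < ⟪X ω, b₀⟫}) (hBayes₂' : 0 < P {ω | ⟪X ω, b₀⟫ < 0})
    -- Assumption (surrogate score function)
    (φ : ℝ → ℝ) (hφconc : StrictConcaveOn ℝ Set.univ φ) (hφmono : StrictMono φ)
    (hφdiff : DifferentiableAt ℝ φ 0) (hφderiv : 0 < deriv φ 0)
    -- regularity conditions
    (henv : Integrable (fun ω => ⨆ b ∈ B, (|φ (⟪X ω, b⟫)| + |φ (-⟪X ω, b⟫)|)) P)
    (R : ℝ) (hR : 0 < R) (hBball : B = Metric.closedBall (0 : EuclideanSpace ℝ (Fin d)) R)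
    (hndeg : ∀ v : EuclideanSpace ℝ (Fin d), v ≠ 0 → 0 < P {ω | ⟪X ω, v⟫ ≠ 0}) :
    ∃! bφ, bφ ∈ B ∧ ∀ b ∈ B, Qphi P X Y φ b ≤ Qphi P X Y φ bφ :=
  surrogate_maximizer_exists_unique_general P X Y hX hY hY01 B hBne hBcpt φ hφconc henv R hBball
    hndeg
end

section
/- Suppose there exists r > 0 such that for every Borel set A ⊆ B_r(0) with positive Lebesgue measure, P(X ∈ A) > 0 (local full support). Then for any b₁, b₂ ∈ ℝ^d that are nonzero and not parallel (neither is a scalar multiple of the other), P(1{X·b₁ ≥ 0} ≠ 1{X·b₂ ≥ 0}) > 0. -/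
open MeasureTheory
open scoped RealInnerProductSpace

/-- Two vectors are parallel if one is a scalar multiple of the other. -/
def Parallel {d : ℕ} (b₁ b₂ : EuclideanSpace ℝ (Fin d)) : Prop :=
  (∃ c : ℝ, b₁ = c • b₂) ∨ (∃ c : ℝ, b₂ = c • b₁)

lemma smul_eq_smul_parallel {d : ℕ} {b₁ b₂ : EuclideanSpace ℝ (Fin d)} {s a : ℝ}
    (hs : s ≠ 0) (h : s • b₁ = a • b₂) : ∃ c : ℝ, b₁ = c • b₂ :=
  ⟨s⁻¹ * a, by rw [← smul_smul, ← h, smul_smul, inv_mul_cancel₀ hs, one_smul]⟩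

lemma exists_sign_split {d : ℕ} (b₁ b₂ : EuclideanSpace ℝ (Fin d))
    (hb₁ : b₁ ≠ 0) (hb₂ : b₂ ≠ 0) (hpar : ¬ Parallel b₁ b₂) :
    ∃ x : EuclideanSpace ℝ (Fin d), 0 < ⟪x, b₁⟫ ∧ ⟪x, b₂⟫ < 0 := by
  have hb₂n : (0:ℝ) < ‖b₂‖ := norm_pos_iff.mpr hb₂
  -- strict Cauchy-Schwarz
  have habs : |⟪b₁, b₂⟫| < ‖b₁‖ * ‖b₂‖ := by
    rw [abs_lt]
    constructor
    · have h : ⟪-b₁, b₂⟫ < ‖-b₁‖ * ‖b₂‖ := by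
        rw [inner_lt_norm_mul_iff_real]
        intro h
        apply hpar
        left
        have h' : ‖b₂‖ • b₁ = (-‖-b₁‖) • b₂ := by
          rw [smul_neg] at h
          rw [neg_smul, ← h, neg_neg]
        exact smul_eq_smul_parallel hb₂n.ne' h'
      rw [inner_neg_left, norm_neg] at h
      linarith
    · rw [inner_lt_norm_mul_iff_real]
      intro h
      exact hpar (Or.inl (smul_eq_smul_parallel hb₂n.ne' h))
  have hD : 0 < ‖b₁‖^2 * ‖b₂‖^2 - ⟪b₁, b₂⟫^2 := by
    have := sq_lt_sq' (abs_lt.mp habs).1 (abs_lt.mp habs).2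
    rw [mul_pow] at this
    linarith
  set D : ℝ := ‖b₁‖^2 * ‖b₂‖^2 - ⟪b₁, b₂⟫^2 with hDdef
  set y : EuclideanSpace ℝ (Fin d) := (‖b₂‖^2) • b₁ - ⟪b₁, b₂⟫ • b₂ with hy
  have hyb₁ : ⟪y, b₁⟫ = D := by
    rw [hy, inner_sub_left, real_inner_smul_left, real_inner_smul_left,
      real_inner_self_eq_norm_sq, hDdef]
    linear_combination (⟪b₁, b₂⟫ : ℝ) * real_inner_comm b₂ b₁
  have hyb₂ : ⟪y, b₂⟫ = 0 := by
    rw [hy, inner_sub_left, real_inner_smul_left, real_inner_smul_left,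
      real_inner_self_eq_norm_sq]
    ring
  set ε : ℝ := D / (2 * (|⟪b₂, b₁⟫| + 1)) with hε
  have hεpos : 0 < ε := by positivity
  refine ⟨y - ε • b₂, ?_, ?_⟩
  · rw [inner_sub_left, real_inner_smul_left, hyb₁]
    have h1 : ε * ⟪b₂, b₁⟫ ≤ ε * |⟪b₂, b₁⟫| :=
      mul_le_mul_of_nonneg_left (le_abs_self _) hεpos.le
    have h2 : ε * (|⟪b₂, b₁⟫| + 1) = D / 2 := by
      rw [hε]; field_simp
    nlinarith [abs_nonneg ⟪b₂, b₁⟫]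
  · rw [inner_sub_left, real_inner_smul_left, hyb₂, real_inner_self_eq_norm_sq]
    have : 0 < ε * ‖b₂‖^2 := by positivity
    linarith

theorem local_full_support_implies_sign_disagreement
    {Ω : Type*} [MeasurableSpace Ω] (P : Measure Ω) [IsProbabilityMeasure P]
    {d : ℕ} (X : Ω → EuclideanSpace ℝ (Fin d)) (hX : Measurable X)
    -- local full support: ∃ r > 0 such that every Borel A ⊆ B_r(0) with λ_d(A) > 0
    -- has P(X ∈ A) > 0
    (hsupp : ∃ r : ℝ, 0 < r ∧ ∀ A : Set (EuclideanSpace ℝ (Fin d)),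
      A ⊆ Metric.ball 0 r → MeasurableSet A → 0 < volume A → 0 < P (X ⁻¹' A)) :
    ∀ b₁ b₂ : EuclideanSpace ℝ (Fin d), b₁ ≠ 0 → b₂ ≠ 0 → ¬ Parallel b₁ b₂ →
      0 < P {ω | ¬ ((0 ≤ ⟪X ω, b₁⟫) ↔ (0 ≤ ⟪X ω, b₂⟫))} := by
  obtain ⟨r, hr, hA⟩ := hsupp
  intro b₁ b₂ hb₁ hb₂ hpar
  obtain ⟨x, hx1, hx2⟩ := exists_sign_split b₁ b₂ hb₁ hb₂ hpar
  set U : Set (EuclideanSpace ℝ (Fin d)) :=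
    {v | 0 < ⟪v, b₁⟫ ∧ ⟪v, b₂⟫ < 0} ∩ Metric.ball 0 r with hU
  have hUopen : IsOpen U := by
    apply IsOpen.inter _ Metric.isOpen_ball
    have hc1 : Continuous fun v : EuclideanSpace ℝ (Fin d) => (⟪v, b₁⟫ : ℝ) :=
      continuous_inner.comp (continuous_id.prodMk continuous_const)
    have hc2 : Continuous fun v : EuclideanSpace ℝ (Fin d) => (⟪v, b₂⟫ : ℝ) :=
      continuous_inner.comp (continuous_id.prodMk continuous_const)
    exact IsOpen.inter (isOpen_lt continuous_const hc1) (isOpen_lt hc2 continuous_const)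
  have hUne : U.Nonempty := by
    set t : ℝ := r / (2 * (‖x‖ + 1)) with ht
    have htpos : 0 < t := by positivity
    refine ⟨t • x, ⟨?_, ?_⟩, ?_⟩
    · rw [real_inner_smul_left]; exact mul_pos htpos hx1
    · rw [real_inner_smul_left]; exact mul_neg_of_pos_of_neg htpos hx2
    · rw [Metric.mem_ball, dist_zero_right, norm_smul, Real.norm_eq_abs,
        abs_of_pos htpos]
      have h1 : t * ‖x‖ < t * (‖x‖ + 1) := by nlinarith
      have h2 : t * (‖x‖ + 1) = r / 2 := by rw [ht]; field_simp
      linarith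
  have hvol : 0 < volume U := hUopen.measure_pos volume hUne
  have hP : 0 < P (X ⁻¹' U) :=
    hA U Set.inter_subset_right hUopen.measurableSet hvol
  refine lt_of_lt_of_le hP (measure_mono ?_)
  intro ω hω
  obtain ⟨⟨h1, h2⟩, _⟩ := hω
  simp only [Set.mem_setOf_eq]
  intro h
  exact absurd (h.mp h1.le) (not_le.mpr h2)
end

section
/- Suppose Assumption (Bayes boundary) holds, φ : ℝ → ℝ is strictly concave, strictly increasing, and differentiable at 0 with φ'(0) > 0, E[sup_{b∈B}(|φ(X·b)| + |φ(−X·b)|)] < ∞, B = {b ∈ ℝ^d : ‖b‖ ≤ R} for some R ∈ (0,∞), and for every nonzero v ∈ ℝ^d, P(X·v ≠ 0) > 0. Suppose further that, with T = X·b₀: (i) E[|T|] < ∞; (ii) there exists a measurable h : ℝ → [0,1] with η(X) = h(T) almost surely, h(t) > 1/2 for all t > 0, and h(t) < 1/2 for all t < 0; and (iii) for every b ∈ ℝ^d there exists a_b ∈ ℝ with a_b·b₀ ∈ B and E[X·b | σ(T)] = a_b·T almost surely. Then the unique maximizer b_φ of Q_φ over B satisfies 1{X·b_φ ≥ 0}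 = 1{η(X) ≥ 1/2} almost surely. -/
open MeasureTheory
open scoped RealInnerProductSpace

/-!
On `B` the objective equals `J b = E[ψ_{h(T)}(X·b)]` with `ψ_p(s) = p φ(s) + (1 - p) φ(-s)`.
It is strictly concave in `b` because `φ` is and `X` is nondegenerate, so its maximizer `b_φ` is
unique. The weight `h(T)` is `σ(T)`-measurable and `ψ_p` is concave, so conditional Jensen with
`E[X·b_φ | T] = a T` gives `J b_φ ≤ J (a b₀)`, whence `b_φ = a b₀`. Finally `t ↦ J (t b₀)` is
concave with derivative `φ'(0) E[(2 h(T) - 1) T] > 0` at `0`, so it exceeds `J 0` at some `t > 0`;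
a maximizer on this line must then have `a > 0`, and `X·b_φ = a T` has the sign of `T`.
-/

open Set Filter Topology

lemma ConcaveOn.le_add_mul_sub_of_hasDerivAt {f : ℝ → ℝ} {f' x : ℝ} (hf : ConcaveOn ℝ univ f)
    (hd : HasDerivAt f f' x) (y : ℝ) : f y ≤ f x + f' * (y - x) := by
  rcases lt_trichotomy y x with hyx | rfl | hxy
  · have := hf.le_slope_of_hasDerivAt (mem_univ y) (mem_univ x) hyx hd
    rw [slope_def_field, le_div_iff₀ (sub_pos.2 hyx)] at this
    linarith
  · simp
  · have := hf.slope_le_of_hasDerivAt (mem_univ x) (mem_univ y) hxy hd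
    rw [slope_def_field, div_le_iff₀ (sub_pos.2 hxy)] at this
    linarith

lemma pos_of_concaveOn_of_lt_of_le {f : ℝ → ℝ} {s : Set ℝ} (hf : ConcaveOn ℝ s f) {a t : ℝ}
    (ha : a ∈ s) (ht : t ∈ s) (ht0 : 0 ≤ t) (h0t : f 0 < f t) (hta : f t ≤ f a) : 0 < a := by
  by_contra ha0
  have h0 := hf.min_le_of_mem_Icc ha ht ⟨not_lt.1 ha0, ht0⟩
  rw [min_eq_right hta] at h0
  exact h0.not_gt h0t

/-- The integrand of `Qphi` once `Y` is replaced by its conditional probability `p`, at the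
margin `s = X·b`. -/
noncomputable def condQphi (φ : ℝ → ℝ) (p s : ℝ) : ℝ := p * φ s + (1 - p) * φ (-s)

lemma concaveOn_condQphi {φ : ℝ → ℝ} (hφ : ConcaveOn ℝ univ φ) {p : ℝ}
    (hp : p ∈ Icc (0 : ℝ) 1) : ConcaveOn ℝ univ (condQphi φ p) :=
  (hφ.smul hp.1).add ((hφ.comp_linearMap (-LinearMap.id)).smul (Icc.mem_iff_one_sub_mem.1 hp).1)

lemma strictConcaveOn_condQphi {φ : ℝ → ℝ} (hφ : StrictConcaveOn ℝ univ φ) {p : ℝ}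
    (hp : p ∈ Icc (0 : ℝ) 1) : StrictConcaveOn ℝ univ (condQphi φ p) := by
  refine ⟨convex_univ, fun x _ y _ hxy a b ha hb hab => ?_⟩
  have hpos := hφ.2 (mem_univ x) (mem_univ y) hxy ha hb hab
  have hneg := hφ.2 (mem_univ (-x)) (mem_univ (-y)) (neg_injective.ne hxy) ha hb hab
  simp only [smul_eq_mul, condQphi] at hpos hneg ⊢
  rw [show a * -x + b * -y = -(a * x + b * y) by ring] at hneg
  rcases eq_or_lt_of_le hp.1 with rfl | hp0
  · linarith
  · nlinarith [mul_lt_mul_of_pos_left hpos hp0,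
      mul_le_mul_of_nonneg_left hneg.le (sub_nonneg.2 hp.2)]

lemma hasDerivAt_condQphi_mul {φ : ℝ → ℝ} (hφ : DifferentiableAt ℝ φ 0) (p τ : ℝ) :
    HasDerivAt (fun t => condQphi φ p (t * τ)) (deriv φ 0 * ((2 * p - 1) * τ)) 0 := by
  have hlin : HasDerivAt (fun t : ℝ => t * τ) τ 0 := by
    simpa using (hasDerivAt_id (0 : ℝ)).mul_const τ
  have hφ' : ∀ y : ℝ, y = 0 → HasDerivAt φ (deriv φ 0) y := by
    rintro _ rfl; exact hφ.hasDerivAt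
  have h₁ := (hφ' _ (zero_mul τ)).comp (0 : ℝ) hlin
  have h₂ := (hφ' _ (by simp)).comp (0 : ℝ) hlin.neg
  have h := (h₁.const_mul p).add (h₂.const_mul (1 - p))
  rwa [show p * (deriv φ 0 * τ) + (1 - p) * (deriv φ 0 * -τ)
    = deriv φ 0 * ((2 * p - 1) * τ) by ring] at h

lemma IsCompact.le_biSup {E : Type*} [TopologicalSpace E] {K : Set E} (hK : IsCompact K)
    {g : E → ℝ} (hg : ContinuousOn g K) {x : E} (hx : x ∈ K) : g x ≤ ⨆ y ∈ K, g y :=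
  le_ciSup₂ (f := fun y (_ : y ∈ K) => g y) ((hK.bddAbove_image hg).mono <|
    iUnion_subset fun _ => range_subset_iff.2 fun hy => mem_image_of_mem g hy) x hx

section Integrability

variable {Ω : Type*} [MeasurableSpace Ω] {μ : Measure Ω}

lemma MeasureTheory.Integrable.mul_of_mem_unitInterval {K G : Ω → ℝ} (hG : Integrable G μ)
    (hK : AEStronglyMeasurable K μ) (hK01 : ∀ ω, K ω ∈ Icc (0 : ℝ) 1) :
    Integrable (fun ω => K ω * G ω) μ :=
  hG.bdd_mul hK (c := 1) <| ae_of_all _ fun ω => by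
    rw [Real.norm_eq_abs, abs_le]; exact ⟨by linarith [(hK01 ω).1], (hK01 ω).2⟩

lemma MeasureTheory.Integrable.condQphi {φ : ℝ → ℝ} {H W : Ω → ℝ}
    (hH : AEStronglyMeasurable H μ) (hH01 : ∀ ω, H ω ∈ Icc (0 : ℝ) 1)
    (hφW : Integrable (fun ω => φ (W ω)) μ) (hφW' : Integrable (fun ω => φ (-W ω)) μ) :
    Integrable (fun ω => condQphi φ (H ω) (W ω)) μ :=
  (hφW.mul_of_mem_unitInterval hH hH01).add (hφW'.mul_of_mem_unitInterval
    (aestronglyMeasurable_const.sub hH) fun ω => Icc.mem_iff_one_sub_mem.1 (hH01 ω))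

theorem integrable_comp_inner_of_integrable_biSup {E : Type*} [NormedAddCommGroup E]
    [InnerProductSpace ℝ E] [MeasurableSpace E] [OpensMeasurableSpace E] {X : Ω → E}
    {φ : ℝ → ℝ} {B : Set E} (hX : Measurable X) (hφ : Continuous φ) (hB : IsCompact B)
    (henv : Integrable (fun ω => ⨆ b ∈ B, (|φ ⟪X ω, b⟫| + |φ (-⟪X ω, b⟫)|)) μ)
    {b : E} (hb : b ∈ B) :
    Integrable (fun ω => φ ⟪X ω, b⟫) μ ∧ Integrable (fun ω => φ (-⟪X ω, b⟫)) μ := by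
  have hle : ∀ ω, |φ ⟪X ω, b⟫| + |φ (-⟪X ω, b⟫)|
      ≤ ⨆ b ∈ B, (|φ ⟪X ω, b⟫| + |φ (-⟪X ω, b⟫)|) := fun ω => by
    have hinner : Continuous fun b => ⟪X ω, b⟫ := continuous_const.inner continuous_id
    exact hB.le_biSup ((hφ.comp hinner).abs.add (hφ.comp hinner.neg).abs).continuousOn hb
  have hinner : Continuous fun x : E => ⟪x, b⟫ := continuous_id.inner continuous_const
  refine ⟨henv.mono' ((hφ.comp hinner).measurable.comp hX).aestronglyMeasurable
    (ae_of_all _ fun ω => ?_),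
    henv.mono' ((hφ.comp hinner.neg).measurable.comp hX).aestronglyMeasurable
    (ae_of_all _ fun ω => ?_)⟩ <;>
  · rw [Real.norm_eq_abs]
    linarith [hle ω, abs_nonneg (φ ⟪X ω, b⟫), abs_nonneg (φ (-⟪X ω, b⟫))]

theorem integrable_of_integrable_comp_concaveOn [IsFiniteMeasure μ] {φ : ℝ → ℝ} {c : ℝ}
    {W : Ω → ℝ} (hφ : ConcaveOn ℝ univ φ) (hd : HasDerivAt φ c 0) (hc : c ≠ 0)
    (hW : AEStronglyMeasurable W μ)
    (hφW : Integrable (fun ω => φ (W ω)) μ) (hφW' : Integrable (fun ω => φ (-W ω)) μ) :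
    Integrable W μ := by
  refine ((((integrable_const |φ 0|).add hφW.abs).add hφW'.abs).div_const |c|).mono' hW
    (ae_of_all _ fun ω => ?_)
  have h₁ := hφ.le_add_mul_sub_of_hasDerivAt hd (W ω)
  have h₂ := hφ.le_add_mul_sub_of_hasDerivAt hd (-W ω)
  rw [Real.norm_eq_abs, le_div_iff₀ (abs_pos.2 hc), ← abs_mul, mul_comm, abs_le]
  simp only [Pi.add_apply]
  constructor <;> linarith [le_abs_self (φ 0), neg_abs_le (φ (W ω)), neg_abs_le (φ (-W ω)),
    abs_nonneg (φ (W ω)), abs_nonneg (φ (-W ω))]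

end Integrability

theorem integral_mul_comp_eq_of_forall_bounded {Ω α : Type*} [MeasurableSpace Ω]
    [MeasurableSpace α] {μ : Measure Ω} {X : Ω → α} {Y : Ω → ℝ} {η : α → ℝ}
    (hX : Measurable X) (hY : Measurable Y) (hη : Measurable η)
    (hY1 : ∀ ω, |Y ω| ≤ 1) (hη1 : ∀ x, |η x| ≤ 1)
    (hcond : ∀ g : α → ℝ, Measurable g → (∃ C, ∀ x, |g x| ≤ C) →
      ∫ ω, Y ω * g (X ω) ∂μ = ∫ ω, η (X ω) * g (X ω) ∂μ)
    {f : α → ℝ} (hf : Measurable f) (hfX : Integrable (fun ω => f (X ω)) μ) :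
    ∫ ω, Y ω * f (X ω) ∂μ = ∫ ω, η (X ω) * f (X ω) ∂μ := by
  set g : ℕ → α → ℝ := fun n x => max (min (f x) n) (-n)
  have hg_meas : ∀ n, Measurable (g n) := fun n => (hf.min measurable_const).max measurable_const
  have hg_le : ∀ n x, |g n x| ≤ n := fun n x =>
    abs_le.2 ⟨le_max_right _ _, max_le (min_le_right _ _) (by linarith [n.cast_nonneg (α := ℝ)])⟩
  have hg_abs : ∀ n x, |g n x| ≤ |f x| := fun n x => by
    simp only [g, abs_le]
    constructor
    · exact le_max_of_le_left (le_min (neg_abs_le _) (by linarith [abs_nonneg (f x)]))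
    · exact max_le ((min_le_left _ _).trans (le_abs_self _)) (by linarith [abs_nonneg (f x)])
  have hg_lim : ∀ x, ∀ᶠ n : ℕ in atTop, g n x = f x := fun x => by
    filter_upwards [eventually_ge_atTop ⌈|f x|⌉₊] with n hn
    have hfn := abs_le.1 ((Nat.le_ceil _).trans (Nat.cast_le.2 hn))
    simp only [g, min_eq_left hfn.2, max_eq_left hfn.1]
  have hlim : ∀ Z : Ω → ℝ, Measurable Z → (∀ ω, |Z ω| ≤ 1) →
      Tendsto (fun n => ∫ ω, Z ω * g n (X ω) ∂μ) atTop (𝓝 (∫ ω, Z ω * f (X ω) ∂μ)) := by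
    intro Z hZ hZ1
    refine tendsto_integral_of_dominated_convergence _
      (fun n => (hZ.mul ((hg_meas n).comp hX)).aestronglyMeasurable) hfX.abs
      (fun n => ae_of_all _ fun ω => ?_)
      (ae_of_all _ fun ω => tendsto_const_nhds.congr' ((hg_lim (X ω)).mono fun n hn => ?_))
    · rw [Real.norm_eq_abs, abs_mul]
      exact (mul_le_mul (hZ1 ω) (hg_abs n (X ω)) (abs_nonneg _) zero_le_one).trans_eq (one_mul _)
    · simp only [hn]
  exact tendsto_nhds_unique (hlim Y hY hY1) <| (hlim _ (hη.comp hX) fun ω => hη1 (X ω)).congr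
    fun n => (hcond (g n) (hg_meas n) ⟨n, hg_le n⟩).symm

theorem Qphi_eq_integral_condQphi {Ω : Type*} [MeasurableSpace Ω] {P : Measure Ω} {d : ℕ}
    {X : Ω → EuclideanSpace ℝ (Fin d)} {Y : Ω → ℝ} {η : EuclideanSpace ℝ (Fin d) → ℝ}
    {φ : ℝ → ℝ} {H : Ω → ℝ} (hX : Measurable X) (hY : Measurable Y) (hη : Measurable η)
    (hY1 : ∀ ω, |Y ω| ≤ 1) (hη1 : ∀ x, |η x| ≤ 1)
    (hcond : ∀ g : EuclideanSpace ℝ (Fin d) → ℝ, Measurable g → (∃ C, ∀ x, |g x| ≤ C) →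
      ∫ ω, Y ω * g (X ω) ∂P = ∫ ω, η (X ω) * g (X ω) ∂P)
    (hηH : ∀ᵐ ω ∂P, η (X ω) = H ω) (hφ : Measurable φ) {b : EuclideanSpace ℝ (Fin d)}
    (hφb : Integrable (fun ω => φ ⟪X ω, b⟫) P) (hφb' : Integrable (fun ω => φ (-⟪X ω, b⟫)) P) :
    Qphi P X Y φ b = ∫ ω, condQphi φ (H ω) ⟪X ω, b⟫ ∂P := by
  set f : EuclideanSpace ℝ (Fin d) → ℝ := fun x => φ ⟪x, b⟫ - φ (-⟪x, b⟫)
  have hf : Measurable f := by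
    have : Measurable fun x : EuclideanSpace ℝ (Fin d) => ⟪x, b⟫ := measurable_id.inner_const
    exact (hφ.comp this).sub (hφ.comp this.neg)
  have hfX : Integrable (fun ω => f (X ω)) P := hφb.sub hφb'
  have hbdd : ∀ Z : Ω → ℝ, Measurable Z → (∀ ω, |Z ω| ≤ 1) →
      Integrable (fun ω => Z ω * f (X ω)) P := fun Z hZ hZ1 =>
    hfX.bdd_mul hZ.aestronglyMeasurable (ae_of_all _ fun ω => (hZ1 ω : _))
  calc Qphi P X Y φ b = ∫ ω, (φ (-⟪X ω, b⟫) + Y ω * f (X ω)) ∂P := by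
        unfold Qphi; congr 1; ext ω; simp only [f]; ring
    _ = ∫ ω, (φ (-⟪X ω, b⟫) + η (X ω) * f (X ω)) ∂P := by
        rw [integral_add hφb' (hbdd Y hY hY1),
          integral_add hφb' (hbdd (fun ω => η (X ω)) (hη.comp hX) fun ω => hη1 (X ω)),
          integral_mul_comp_eq_of_forall_bounded hX hY hη hY1 hη1 hcond hf hfX]
    _ = ∫ ω, condQphi φ (H ω) ⟪X ω, b⟫ ∂P := by
        refine integral_congr_ae (hηH.mono fun ω hω => ?_)
        simp only [condQphi, f, hω]; ring

section CondExp

variable {Ω : Type*} {m m₀ : MeasurableSpace Ω} {μ : Measure Ω} [IsFiniteMeasure μ]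
  {φ : ℝ → ℝ} {H W M : Ω → ℝ}

theorem integral_mul_comp_le_of_condExp_eq (hm : m ≤ m₀) (hφ : ConcaveOn ℝ univ φ)
    (hφc : Continuous φ) (hH : StronglyMeasurable[m] H) (hH01 : ∀ ω, H ω ∈ Icc (0 : ℝ) 1)
    (hW : Integrable W μ) (hWM : μ[W | m] =ᵐ[μ] M) (hφW : Integrable (fun ω => φ (W ω)) μ)
    (hφM : Integrable (fun ω => φ (M ω)) μ) :
    ∫ ω, H ω * φ (W ω) ∂μ ≤ ∫ ω, H ω * φ (M ω) ∂μ := by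
  have hHm : AEStronglyMeasurable H μ := (hH.mono hm).aestronglyMeasurable
  have hJensen := hφ.condExp_map_le_univ hm hφc.upperSemicontinuous hW hφW
  calc ∫ ω, H ω * φ (W ω) ∂μ = ∫ ω, (μ[H * (φ ∘ W) | m]) ω ∂μ := (integral_condExp hm).symm
    _ = ∫ ω, H ω * (μ[φ ∘ W | m]) ω ∂μ := integral_congr_ae <|
      condExp_mul_of_stronglyMeasurable_left hH (hφW.mul_of_mem_unitInterval hHm hH01) hφW
    _ ≤ ∫ ω, H ω * φ (M ω) ∂μ := by
      refine integral_mono_ae (integrable_condExp.mul_of_mem_unitInterval hHm hH01)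
        (hφM.mul_of_mem_unitInterval hHm hH01) ?_
      filter_upwards [hJensen, hWM] with ω hω hωM
      simp only [Function.comp_apply, hωM] at hω
      exact mul_le_mul_of_nonneg_left hω (hH01 ω).1

theorem integral_condQphi_le_of_condExp_eq (hm : m ≤ m₀) (hφ : ConcaveOn ℝ univ φ)
    (hφc : Continuous φ) (hH : StronglyMeasurable[m] H) (hH01 : ∀ ω, H ω ∈ Icc (0 : ℝ) 1)
    (hW : Integrable W μ) (hWM : μ[W | m] =ᵐ[μ] M)
    (hφW : Integrable (fun ω => φ (W ω)) μ) (hφW' : Integrable (fun ω => φ (-W ω)) μ)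
    (hφM : Integrable (fun ω => φ (M ω)) μ) (hφM' : Integrable (fun ω => φ (-M ω)) μ) :
    ∫ ω, condQphi φ (H ω) (W ω) ∂μ ≤ ∫ ω, condQphi φ (H ω) (M ω) ∂μ := by
  have hHm : AEStronglyMeasurable H μ := (hH.mono hm).aestronglyMeasurable
  have hH' : StronglyMeasurable[m] (fun ω => 1 - H ω) := stronglyMeasurable_const.sub hH
  have hH'm : AEStronglyMeasurable (fun ω => 1 - H ω) μ := (hH'.mono hm).aestronglyMeasurable
  have hH01' : ∀ ω, 1 - H ω ∈ Icc (0 : ℝ) 1 := fun ω => Icc.mem_iff_one_sub_mem.1 (hH01 ω)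
  have hWM' : μ[-W | m] =ᵐ[μ] -M := by
    filter_upwards [condExp_neg W m, hWM] with ω h₁ h₂
    simp [h₁, h₂]
  simp only [condQphi]
  rw [integral_add (hφW.mul_of_mem_unitInterval hHm hH01)
      (hφW'.mul_of_mem_unitInterval hH'm hH01'),
    integral_add (hφM.mul_of_mem_unitInterval hHm hH01)
      (hφM'.mul_of_mem_unitInterval hH'm hH01')]
  exact add_le_add (integral_mul_comp_le_of_condExp_eq hm hφ hφc hH hH01 hW hWM hφW hφM)
    (integral_mul_comp_le_of_condExp_eq hm hφ hφc hH' hH01' hW.neg hWM' hφW' hφM')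

end CondExp

theorem strictConcaveOn_integral_condQphi {Ω E : Type*} [MeasurableSpace Ω] {μ : Measure Ω}
    [NormedAddCommGroup E] [InnerProductSpace ℝ E] {X : Ω → E} {H : Ω → ℝ} {φ : ℝ → ℝ}
    {B : Set E} (hB : Convex ℝ B) (hφ : StrictConcaveOn ℝ univ φ)
    (hH : AEStronglyMeasurable H μ) (hH01 : ∀ ω, H ω ∈ Icc (0 : ℝ) 1)
    (hint : ∀ b ∈ B, Integrable (fun ω => φ ⟪X ω, b⟫) μ ∧ Integrable (fun ω => φ (-⟪X ω, b⟫)) μ)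
    (hX : ∀ v : E, v ≠ 0 → 0 < μ {ω | ⟪X ω, v⟫ ≠ 0}) :
    StrictConcaveOn ℝ B (fun b => ∫ ω, condQphi φ (H ω) ⟪X ω, b⟫ ∂μ) := by
  refine ⟨hB, fun x hx y hy hxy a b ha hb hab => ?_⟩
  have hI : ∀ z ∈ B, Integrable (fun ω => condQphi φ (H ω) ⟪X ω, z⟫) μ := fun z hz =>
    (hint z hz).1.condQphi hH hH01 (hint z hz).2
  have hIxy : Integrable (fun ω => a * condQphi φ (H ω) ⟪X ω, x⟫
      + b * condQphi φ (H ω) ⟪X ω, y⟫) μ :=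
    ((hI x hx).const_mul a).add ((hI y hy).const_mul b)
  have hgap : ∀ ω, a * condQphi φ (H ω) ⟪X ω, x⟫ + b * condQphi φ (H ω) ⟪X ω, y⟫
      ≤ condQphi φ (H ω) ⟪X ω, a • x + b • y⟫ ∧ (⟪X ω, x⟫ ≠ ⟪X ω, y⟫ →
      a * condQphi φ (H ω) ⟪X ω, x⟫ + b * condQphi φ (H ω) ⟪X ω, y⟫
        < condQphi φ (H ω) ⟪X ω, a • x + b • y⟫) := fun ω => by
    have hψ := strictConcaveOn_condQphi hφ (hH01 ω)
    have hle := hψ.concaveOn.2 (mem_univ ⟪X ω, x⟫) (mem_univ ⟪X ω, y⟫) ha.le hb.le hab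
    have hlt := fun hω => hψ.2 (mem_univ ⟪X ω, x⟫) (mem_univ ⟪X ω, y⟫) hω ha hb hab
    simp only [smul_eq_mul, ← real_inner_smul_right, ← inner_add_right] at hle hlt
    exact ⟨hle, hlt⟩
  have hpos : 0 < ∫ ω, (condQphi φ (H ω) ⟪X ω, a • x + b • y⟫
      - (a * condQphi φ (H ω) ⟪X ω, x⟫ + b * condQphi φ (H ω) ⟪X ω, y⟫)) ∂μ := by
    refine (integral_pos_iff_support_of_nonneg (fun ω => sub_nonneg.2 (hgap ω).1)
      ((hI _ (hB hx hy ha.le hb.le hab)).sub hIxy)).2 <|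
      (hX (x - y) (sub_ne_zero.2 hxy)).trans_le (measure_mono fun ω hω => ?_)
    rw [mem_ofPred_eq, inner_sub_right, sub_ne_zero] at hω
    exact (sub_pos.2 ((hgap ω).2 hω)).ne'
  rw [integral_sub (hI _ (hB hx hy ha.le hb.le hab)) hIxy,
    integral_add ((hI x hx).const_mul a) ((hI y hy).const_mul b),
    integral_const_mul, integral_const_mul] at hpos
  simp only [smul_eq_mul]
  linarith

theorem exists_integral_lt_of_hasDerivAt {Ω : Type*} [MeasurableSpace Ω] {μ : Measure Ω}
    {Ψ : Ω → ℝ → ℝ} {D : Ω → ℝ} (hΨ : ∀ ω, ConcaveOn ℝ univ (Ψ ω))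
    (hD : ∀ ω, HasDerivAt (Ψ ω) (D ω) 0) (hDint : Integrable D μ) (hDpos : 0 < ∫ ω, D ω ∂μ)
    {t₁ : ℝ} (ht₁ : 0 < t₁) (hint : ∀ t ∈ Icc 0 t₁, Integrable (fun ω => Ψ ω t) μ) :
    ∃ t ∈ Ioc 0 t₁, ∫ ω, Ψ ω 0 ∂μ < ∫ ω, Ψ ω t ∂μ := by
  have hint_slope : ∀ t ∈ Icc 0 t₁, Integrable (fun ω => slope (Ψ ω) 0 t) μ := fun t ht => by
    simp only [slope_def_field]
    exact ((hint t ht).sub (hint 0 ⟨le_rfl, ht₁.le⟩)).div_const (t - 0)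
  -- concavity squeezes the difference quotients between the one at `t₁` and the derivative
  have hslope_bound : ∀ t ∈ Ioc 0 t₁, ∀ ω, ‖slope (Ψ ω) 0 t‖ ≤ |slope (Ψ ω) 0 t₁| + |D ω| := by
    intro t ht ω
    have hlow := (hΨ ω).slope_anti (mem_univ 0) ⟨mem_univ t, ht.1.ne'⟩
      ⟨mem_univ t₁, ht₁.ne'⟩ ht.2
    have hup := (hΨ ω).slope_le_of_hasDerivAt (mem_univ 0) (mem_univ t) ht.1 (hD ω)
    rw [Real.norm_eq_abs, abs_le]
    constructor <;> linarith [neg_abs_le (slope (Ψ ω) 0 t₁), le_abs_self (D ω),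
      abs_nonneg (slope (Ψ ω) 0 t₁), abs_nonneg (D ω)]
  have hsmall : ∀ᶠ t in 𝓝[>] 0, t ∈ Ioc 0 t₁ :=
    mem_of_superset (Ioo_mem_nhdsGT ht₁) Ioo_subset_Ioc_self
  have hlim : Tendsto (fun t => ∫ ω, slope (Ψ ω) 0 t ∂μ) (𝓝[>] 0) (𝓝 (∫ ω, D ω ∂μ)) :=
    tendsto_integral_filter_of_dominated_convergence _
      (hsmall.mono fun t ht => (hint_slope t (Ioc_subset_Icc_self ht)).aestronglyMeasurable)
      (hsmall.mono fun t ht => ae_of_all _ (hslope_bound t ht))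
      ((hint_slope t₁ ⟨ht₁.le, le_rfl⟩).abs.add hDint.abs)
      (ae_of_all _ fun ω =>
        (hasDerivAt_iff_tendsto_slope.1 (hD ω)).mono_left (nhdsGT_le_nhdsNE 0))
  obtain ⟨t, hpos, ht⟩ := ((hlim.eventually (eventually_gt_nhds hDpos)).and hsmall).exists
  refine ⟨t, ht, ?_⟩
  simp only [slope_def_field, integral_div] at hpos
  rw [integral_sub (hint t (Ioc_subset_Icc_self ht)) (hint 0 ⟨le_rfl, ht₁.le⟩)] at hpos
  have := (div_pos_iff_of_pos_right (by linarith [ht.1] : (0 : ℝ) < t - 0)).1 hpos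
  linarith

section SingleIndex

variable {Ω : Type*} [MeasurableSpace Ω] {μ : Measure Ω} {T : Ω → ℝ} {h : ℝ → ℝ}

lemma integrable_two_mul_sub_one_mul (hT : Integrable T μ) (hh : Measurable h)
    (hh01 : ∀ t, h t ∈ Icc (0 : ℝ) 1) : Integrable (fun ω => (2 * h (T ω) - 1) * T ω) μ :=
  hT.bdd_mul (c := 1)
    ((hh.comp_aemeasurable hT.1.aemeasurable).const_mul 2 |>.sub_const 1).aestronglyMeasurable
    (ae_of_all _ fun ω => by
      rw [Real.norm_eq_abs, abs_le]
      constructor <;> linarith [(hh01 (T ω)).1, (hh01 (T ω)).2])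

lemma integral_two_mul_sub_one_mul_pos (hT : Integrable T μ) (hh : Measurable h)
    (hh01 : ∀ t, h t ∈ Icc (0 : ℝ) 1) (hhpos : ∀ t, 0 < t → 1 / 2 < h t)
    (hhneg : ∀ t, t < 0 → h t < 1 / 2) (hT0 : 0 < μ {ω | 0 < T ω}) :
    0 < ∫ ω, (2 * h (T ω) - 1) * T ω ∂μ := by
  have hnonneg : ∀ t, 0 ≤ (2 * h t - 1) * t := fun t => by
    rcases lt_trichotomy t 0 with ht | rfl | ht
    · exact mul_nonneg_of_nonpos_of_nonpos (by linarith [hhneg t ht]) ht.le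
    · simp
    · exact mul_nonneg (by linarith [hhpos t ht]) ht.le
  refine (integral_pos_iff_support_of_nonneg (fun ω => hnonneg (T ω))
    (integrable_two_mul_sub_one_mul hT hh hh01)).2 (hT0.trans_le (measure_mono fun ω hω => ?_))
  exact (mul_pos (by linarith [hhpos _ hω]) hω).ne'

theorem exists_integral_condQphi_mul_lt {φ : ℝ → ℝ} (hφ : ConcaveOn ℝ univ φ)
    (hφd : DifferentiableAt ℝ φ 0) (hφ' : 0 < deriv φ 0) (hT : Integrable T μ)
    (hh : Measurable h) (hh01 : ∀ t, h t ∈ Icc (0 : ℝ) 1) (hhpos : ∀ t, 0 < t → 1 / 2 < h t)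
    (hhneg : ∀ t, t < 0 → h t < 1 / 2) (hT0 : 0 < μ {ω | 0 < T ω}) {t₁ : ℝ} (ht₁ : 0 < t₁)
    (hint : ∀ t ∈ Icc 0 t₁, Integrable (fun ω => condQphi φ (h (T ω)) (t * T ω)) μ) :
    ∃ t ∈ Ioc 0 t₁, ∫ ω, condQphi φ (h (T ω)) (0 * T ω) ∂μ
      < ∫ ω, condQphi φ (h (T ω)) (t * T ω) ∂μ := by
  refine exists_integral_lt_of_hasDerivAt
    (fun ω => (concaveOn_condQphi hφ (hh01 _)).comp_linearMap (LinearMap.mulRight ℝ (T ω)))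
    (fun ω => hasDerivAt_condQphi_mul hφd _ _)
    ((integrable_two_mul_sub_one_mul hT hh hh01).const_mul _) ?_ ht₁ hint
  rw [integral_const_mul]
  exact mul_pos hφ' (integral_two_mul_sub_one_mul_pos hT hh hh01 hhpos hhneg hT0)

end SingleIndex

theorem single_index_implies_T2_general
    {Ω : Type*} [MeasurableSpace Ω] (P : Measure Ω) [IsProbabilityMeasure P]
    {d : ℕ} (X : Ω → EuclideanSpace ℝ (Fin d)) (Y : Ω → ℝ)
    (η : EuclideanSpace ℝ (Fin d) → ℝ)
    (hX : Measurable X) (hY : Measurable Y) (hY01 : ∀ ω, Y ω = 0 ∨ Y ω = 1)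
    (hη : Measurable η) (hη01 : ∀ x, η x ∈ Set.Icc (0 : ℝ) 1)
    (hcond : ∀ g : EuclideanSpace ℝ (Fin d) → ℝ, Measurable g → (∃ C, ∀ x, |g x| ≤ C) →
      ∫ ω, Y ω * g (X ω) ∂P = ∫ ω, η (X ω) * g (X ω) ∂P)
    (B : Set (EuclideanSpace ℝ (Fin d))) (hBcpt : IsCompact B)
    (b₀ : EuclideanSpace ℝ (Fin d))
    -- Assumption (Bayes boundary)
    (hBayes₁ : ∀ᵐ ω ∂P, ((1 : ℝ) / 2 ≤ η (X ω) ↔ 0 ≤ ⟪X ω, b₀⟫))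
    (hBayes₂ : 0 < P {ω | 0 < ⟪X ω, b₀⟫})
    -- Assumption (surrogate score function)
    (φ : ℝ → ℝ) (hφconc : StrictConcaveOn ℝ Set.univ φ)
    (hφdiff : DifferentiableAt ℝ φ 0) (hφderiv : 0 < deriv φ 0)
    -- regularity conditions
    (henv : Integrable (fun ω => ⨆ b ∈ B, (|φ (⟪X ω, b⟫)| + |φ (-⟪X ω, b⟫)|)) P)
    (R : ℝ) (hR : 0 < R) (hBball : B = Metric.closedBall (0 : EuclideanSpace ℝ (Fin d)) R)
    (hndeg : ∀ v : EuclideanSpace ℝ (Fin d), v ≠ 0 → 0 < P {ω | ⟪X ω, v⟫ ≠ 0})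
    -- single index assumption, with T = X·b₀
    (hTint : Integrable (fun ω => ⟪X ω, b₀⟫) P)
    (h : ℝ → ℝ) (hh : Measurable h) (hh01 : ∀ t, h t ∈ Set.Icc (0 : ℝ) 1)
    (hηh : ∀ᵐ ω ∂P, η (X ω) = h (⟪X ω, b₀⟫))
    (hhpos : ∀ t : ℝ, 0 < t → 1 / 2 < h t) (hhneg : ∀ t : ℝ, t < 0 → h t < 1 / 2)
    (hlin : ∀ b : EuclideanSpace ℝ (Fin d), ∃ a : ℝ, a • b₀ ∈ B ∧
      P[(fun ω => ⟪X ω, b⟫) | MeasurableSpace.comap (fun ω => ⟪X ω, b₀⟫) inferInstance]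
        =ᵐ[P] fun ω => a * ⟪X ω, b₀⟫) :
    ∀ bφ ∈ B, (∀ b ∈ B, Qphi P X Y φ b ≤ Qphi P X Y φ bφ) →
      ∀ᵐ ω ∂P, ((0 ≤ ⟪X ω, bφ⟫) ↔ ((1 : ℝ) / 2 ≤ η (X ω))) := by
  intro bφ hbφB hmax
  have hφc : Continuous φ := continuousOn_univ.1 (hφconc.concaveOn.continuousOn isOpen_univ)
  have hTm : Measurable fun ω => ⟪X ω, b₀⟫ := hX.inner_const
  have hφB := fun b (hb : b ∈ B) => integrable_comp_inner_of_integrable_biSup hX hφc hBcpt henv hb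
  set J : EuclideanSpace ℝ (Fin d) → ℝ := fun b => ∫ ω, condQphi φ (h ⟪X ω, b₀⟫) ⟪X ω, b⟫ ∂P
  have hQJ : ∀ b ∈ B, Qphi P X Y φ b = J b := fun b hb =>
    Qphi_eq_integral_condQphi hX hY hη (fun ω => by rcases hY01 ω with hω | hω <;> simp [hω])
      (fun x => abs_le.2 ⟨by linarith [(hη01 x).1], (hη01 x).2⟩) hcond hηh hφc.measurable
      (hφB b hb).1 (hφB b hb).2
  have hJ : StrictConcaveOn ℝ B J :=
    strictConcaveOn_integral_condQphi (hBball ▸ convex_closedBall 0 R) hφconc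
      (hh.comp hTm).aestronglyMeasurable (fun ω => hh01 _) hφB hndeg
  have hmaxJ : IsMaxOn J B bφ := fun b hb => show J b ≤ J bφ by
    rw [← hQJ b hb, ← hQJ bφ hbφB]; exact hmax b hb
  obtain ⟨a, haB, hcondExp⟩ := hlin bφ
  have hJa : J bφ ≤ J (a • b₀) := by
    have hφa := hφB _ haB
    simp only [J, real_inner_smul_right] at hφa ⊢
    exact integral_condQphi_le_of_condExp_eq hTm.comap_le hφconc.concaveOn hφc
      (hh.comp (comap_measurable _)).stronglyMeasurable (fun ω => hh01 _)
      (integrable_of_integrable_comp_concaveOn hφconc.concaveOn hφdiff.hasDerivAt hφderiv.ne'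
        hX.inner_const.aestronglyMeasurable (hφB bφ hbφB).1 (hφB bφ hbφB).2)
      hcondExp (hφB bφ hbφB).1 (hφB bφ hbφB).2 hφa.1 hφa.2
  have hbφ : bφ = a • b₀ := hJ.eq_of_isMaxOn hmaxJ (fun b hb => (hmaxJ hb).trans hJa) hbφB haB
  have hb₀ : 0 < ‖b₀‖ := norm_pos_iff.2 <| by rintro rfl; simp at hBayes₂
  have hsB : ∀ s ∈ Icc 0 (R / ‖b₀‖), s • b₀ ∈ B := fun s hs => by
    rw [hBball, mem_closedBall_zero_iff, norm_smul, Real.norm_of_nonneg hs.1, ← le_div_iff₀ hb₀]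
    exact hs.2
  obtain ⟨t, ht, hJt⟩ : ∃ t ∈ Ioc 0 (R / ‖b₀‖), J ((0 : ℝ) • b₀) < J (t • b₀) := by
    simp only [J, real_inner_smul_right]
    refine exists_integral_condQphi_mul_lt hφconc.concaveOn hφdiff hφderiv hTint hh hh01 hhpos
      hhneg hBayes₂ (div_pos hR hb₀) fun s hs => ?_
    have hφs := hφB _ (hsB s hs)
    simp only [real_inner_smul_right] at hφs
    exact hφs.1.condQphi (hh.comp hTm).aestronglyMeasurable (fun ω => hh01 _) hφs.2
  have htB := hsB t (Ioc_subset_Icc_self ht)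
  have ha : 0 < a :=
    pos_of_concaveOn_of_lt_of_le (hJ.concaveOn.comp_linearMap (LinearMap.toSpanSingleton ℝ _ b₀))
      haB htB ht.1.le hJt (show J (t • b₀) ≤ J (a • b₀) from hbφ ▸ hmaxJ htB)
  filter_upwards [hBayes₁] with ω hω
  rw [hbφ, real_inner_smul_right, hω]
  exact mul_nonneg_iff_of_pos_left ha

theorem single_index_implies_T2
    {Ω : Type*} [MeasurableSpace Ω] (P : Measure Ω) [IsProbabilityMeasure P]
    {d : ℕ} (X : Ω → EuclideanSpace ℝ (Fin d)) (Y : Ω → ℝ)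
    (η : EuclideanSpace ℝ (Fin d) → ℝ)
    (hX : Measurable X) (hY : Measurable Y) (hY01 : ∀ ω, Y ω = 0 ∨ Y ω = 1)
    (hη : Measurable η) (hη01 : ∀ x, η x ∈ Set.Icc (0 : ℝ) 1)
    (hcond : ∀ g : EuclideanSpace ℝ (Fin d) → ℝ, Measurable g → (∃ C, ∀ x, |g x| ≤ C) →
      ∫ ω, Y ω * g (X ω) ∂P = ∫ ω, η (X ω) * g (X ω) ∂P)
    (B : Set (EuclideanSpace ℝ (Fin d))) (hBne : B.Nonempty) (hBcpt : IsCompact B)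
    (b₀ : EuclideanSpace ℝ (Fin d)) (hb₀B : b₀ ∈ B)
    -- Assumption (Bayes boundary)
    (hBayes₁ : ∀ᵐ ω ∂P, ((1 : ℝ) / 2 ≤ η (X ω) ↔ 0 ≤ ⟪X ω, b₀⟫))
    (hBayes₂ : 0 < P {ω | 0 < ⟪X ω, b₀⟫}) (hBayes₂' : 0 < P {ω | ⟪X ω, b₀⟫ < 0})
    -- Assumption (surrogate score function)
    (φ : ℝ → ℝ) (hφconc : StrictConcaveOn ℝ Set.univ φ) (hφmono : StrictMono φ)
    (hφdiff : DifferentiableAt ℝ φ 0) (hφderiv : 0 < deriv φ 0)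
    -- regularity conditions
    (henv : Integrable (fun ω => ⨆ b ∈ B, (|φ (⟪X ω, b⟫)| + |φ (-⟪X ω, b⟫)|)) P)
    (R : ℝ) (hR : 0 < R) (hBball : B = Metric.closedBall (0 : EuclideanSpace ℝ (Fin d)) R)
    (hndeg : ∀ v : EuclideanSpace ℝ (Fin d), v ≠ 0 → 0 < P {ω | ⟪X ω, v⟫ ≠ 0})
    -- single index assumption, with T = X·b₀
    (hTint : Integrable (fun ω => ⟪X ω, b₀⟫) P)
    (h : ℝ → ℝ) (hh : Measurable h) (hh01 : ∀ t, h t ∈ Set.Icc (0 : ℝ) 1)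
    (hηh : ∀ᵐ ω ∂P, η (X ω) = h (⟪X ω, b₀⟫))
    (hhpos : ∀ t : ℝ, 0 < t → 1 / 2 < h t) (hhneg : ∀ t : ℝ, t < 0 → h t < 1 / 2)
    (hlin : ∀ b : EuclideanSpace ℝ (Fin d), ∃ a : ℝ, a • b₀ ∈ B ∧
      P[(fun ω => ⟪X ω, b⟫) | MeasurableSpace.comap (fun ω => ⟪X ω, b₀⟫) inferInstance]
        =ᵐ[P] fun ω => a * ⟪X ω, b₀⟫) :
    ∀ bφ ∈ B, (∀ b ∈ B, Qphi P X Y φ b ≤ Qphi P X Y φ bφ) →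
      ∀ᵐ ω ∂P, ((0 ≤ ⟪X ω, bφ⟫) ↔ ((1 : ℝ) / 2 ≤ η (X ω))) :=
  single_index_implies_T2_general P X Y η hX hY hY01 hη hη01 hcond B hBcpt b₀ hBayes₁ hBayes₂ φ
    hφconc hφdiff hφderiv henv R hR hBball hndeg hTint h hh hh01 hηh hhpos hhneg hlin
end

section
/- Let T be a real random variable with P(T ≠ 0) > 0, let h : ℝ → [0,1] be measurable with h(t) > 1/2 for all t > 0 and h(t) < 1/2 for all t < 0, and let φ : ℝ → ℝ be strictly increasing. Let a < 0 be a real number and suppose the random variables h(T)·φ(aT) + (1−h(T))·φ(−aT) and h(T)·φ(|a|T) + (1−h(T))·φ(−|a|T) are integrable. Then E[h(T)·φ(|a|T) + (1−h(T))·φ(−|a|T)] > E[h(T)·φ(aT) + (1−h(T))·φ(−aT)]. -/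
open MeasureTheory

theorem flip_sign_increases_surrogate_value
    {Ω : Type*} [MeasurableSpace Ω] (P : Measure Ω) [IsProbabilityMeasure P]
    (T : Ω → ℝ) (hT : Measurable T) (hTne : 0 < P {ω | T ω ≠ 0})
    (h : ℝ → ℝ) (hh : Measurable h) (hh01 : ∀ t, h t ∈ Set.Icc (0 : ℝ) 1)
    (hhpos : ∀ t : ℝ, 0 < t → 1 / 2 < h t) (hhneg : ∀ t : ℝ, t < 0 → h t < 1 / 2)
    (φ : ℝ → ℝ) (hφ : StrictMono φ)
    (a : ℝ) (ha : a < 0)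
    (hint1 : Integrable (fun ω => h (T ω) * φ (a * T ω) + (1 - h (T ω)) * φ (-(a * T ω))) P)
    (hint2 : Integrable (fun ω =>
      h (T ω) * φ (|a| * T ω) + (1 - h (T ω)) * φ (-(|a| * T ω))) P) :
    ∫ ω, (h (T ω) * φ (a * T ω) + (1 - h (T ω)) * φ (-(a * T ω))) ∂P
      < ∫ ω, (h (T ω) * φ (|a| * T ω) + (1 - h (T ω)) * φ (-(|a| * T ω))) ∂P := by
  set f := fun ω => h (T ω) * φ (a * T ω) + (1 - h (T ω)) * φ (-(a * T ω)) with hf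
  set g := fun ω => h (T ω) * φ (|a| * T ω) + (1 - h (T ω)) * φ (-(|a| * T ω)) with hg
  have habs : |a| = -a := abs_of_neg ha
  have key : ∀ ω, g ω - f ω = (2 * h (T ω) - 1) * (φ (-(a * T ω)) - φ (a * T ω)) := by
    intro ω
    simp only [hf, hg, habs]
    ring_nf
  have hpos : ∀ ω, T ω ≠ 0 → 0 < g ω - f ω := by
    intro ω hω
    rw [key]
    rcases lt_or_gt_of_ne hω with ht | ht
    · have h1 : 2 * h (T ω) - 1 < 0 := by have := hhneg _ ht; linarith
      have h2 : φ (-(a * T ω)) - φ (a * T ω) < 0 := by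
        have : -(a * T ω) < a * T ω := by nlinarith
        linarith [hφ this]
      exact mul_pos_of_neg_of_neg h1 h2
    · have h1 : 0 < 2 * h (T ω) - 1 := by have := hhpos _ ht; linarith
      have h2 : 0 < φ (-(a * T ω)) - φ (a * T ω) := by
        have : a * T ω < -(a * T ω) := by nlinarith
        linarith [hφ this]
      exact mul_pos h1 h2
  have hnn : ∀ ω, 0 ≤ g ω - f ω := by
    intro ω
    by_cases hω : T ω = 0
    · rw [key]; simp [hω]
    · exact (hpos ω hω).le
  have hint : Integrable (fun ω => g ω - f ω) P := hint2.sub hint1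
  have hsub : {ω | T ω ≠ 0} ⊆ Function.support (fun ω => g ω - f ω) := by
    intro ω hω
    exact (hpos ω hω).ne'
  have hpossup : 0 < ∫ ω, (g ω - f ω) ∂P := by
    rw [integral_pos_iff_support_of_nonneg hnn hint]
    exact lt_of_lt_of_le hTne (measure_mono hsub)
  rw [integral_sub hint2 hint1] at hpossup
  linarith
end
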